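/- arXiv:2403.04159 — 3 statements merged into one kernel-verified Lean document; each statement's English description precedes it below -/
import Mathlib

section
/- The digit functions d_1, d_2, … of the P2DGL expansion are independent and identically distributed random variables on ((0,1], Borel sets, Lebesgue measure): for any k∈ℕ, indices n_1<⋯<n_k and values a_1,…,a_k∈ℕ, the Lebesgue measure of {x: d_{n_1}(x)=a_1,…,d_{n_k}(x)=a_k} equals 2^{−(a_1+⋯+a_k)}. -/
open MeasureTheory Filter Set Real

/-- First digit of the power-2-decaying Gauss-like expansion:
`⌈y⌉` in the paper denotes the smallest integer strictly larger than `y`. -/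
noncomputable def p2dD1 (x : ℝ) : ℕ := (⌊-Real.logb 2 x⌋ + 1).toNat

/-- The Gauss-like map `T x = 2^n x - 1` on `(1/2^n, 1/2^(n-1)]`. -/
noncomputable def p2dT (x : ℝ) : ℝ := 2 ^ p2dD1 x * x - 1

/-- `n`-th digit (`n ≥ 1`) of the P2DGL expansion. -/
noncomputable def p2dDigit (n : ℕ) (x : ℝ) : ℕ := p2dD1 (p2dT^[n-1] x)

/-- Maximal digit among the first `n` digits. -/
noncomputable def p2dL (n : ℕ) (x : ℝ) : ℕ :=
  Finset.sup (Finset.Icc 1 n) (fun i => p2dDigit i x)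

/-!
On the interval where the first digit equals `a`, the map `T` is the affine bijection
`x ↦ 2 ^ a * x - 1` onto `(0, 1]`, so `{d₁ = a} ∩ T⁻¹ A` has measure `2⁻ᵃ · |A|`. Summing over `a`
shows that `T` preserves Lebesgue measure on `(0, 1]`. Prescribing the digits `d₁ ∘ T^[m i]`,
`m 0 < m 1 < ⋯`, cuts out the pullback along the measure-preserving `T^[m 0]` of such a set, with
`A` prescribing the remaining digits, so the product formula follows by induction.
-/

theorem measurable_p2dD1 : Measurable p2dD1 :=
  measurable_from_top.comp ((measurable_log.div_const _).neg.floor.add_const 1)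

theorem measurable_p2dT : Measurable p2dT :=
  ((measurable_from_top.comp measurable_p2dD1).mul measurable_id).sub_const 1

theorem p2dD1_eq_iff {a : ℕ} (ha : a ≠ 0) {x : ℝ} (hx : 0 < x) :
    p2dD1 x = a ↔ 2 ^ a * x - 1 ∈ Ioc (0 : ℝ) 1 := by
  have hlog : logb 2 (2 ^ a * x) = a + logb 2 x := by
    rw [logb_mul (by positivity) hx.ne', logb_pow, logb_self_eq_one one_lt_two, mul_one]
  have hax : 0 < (2 : ℝ) ^ a * x := by positivity
  have htoNat : p2dD1 x = a ↔ ⌊-logb 2 x⌋ = (a : ℤ) - 1 := by unfold p2dD1; omega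
  rw [htoNat, Int.floor_eq_iff, mem_Ioc, sub_pos, sub_le_iff_le_add, one_add_one_eq_two,
    ← logb_pos_iff one_lt_two hax, ← logb_le_logb one_lt_two hax two_pos,
    logb_self_eq_one one_lt_two, hlog]
  push_cast
  constructor <;> rintro ⟨h1, h2⟩ <;> constructor <;> linarith

theorem p2dD1_ne_zero {x : ℝ} (hx : x ∈ Ioc (0 : ℝ) 1) : p2dD1 x ≠ 0 := by
  have : 0 ≤ ⌊-logb 2 x⌋ := Int.floor_nonneg.2 (neg_nonneg.2 (logb_nonpos one_lt_two hx.1.le hx.2))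
  unfold p2dD1; omega

theorem volume_preimage_mul_left_sub {c : ℝ} (hc : c ≠ 0) (b : ℝ) (s : Set ℝ) :
    volume ((fun x => c * x - b) ⁻¹' s) = ENNReal.ofReal |c⁻¹| * volume s := by
  rw [show (fun x => c * x - b) ⁻¹' s = (c * ·) ⁻¹' ((· + -b) ⁻¹' s) by ext; simp [sub_eq_add_neg],
    Real.volume_preimage_mul_left hc, measure_preimage_add_right]

theorem restrict_Ioc_p2dD1_inter_preimage_p2dT {a : ℕ} (ha : a ≠ 0) {A : Set ℝ} :
    volume.restrict (Ioc (0 : ℝ) 1) (p2dD1 ⁻¹' {a} ∩ p2dT ⁻¹' A)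
      = 2⁻¹ ^ a * volume.restrict (Ioc (0 : ℝ) 1) A := by
  have hcyl : p2dD1 ⁻¹' {a} ∩ p2dT ⁻¹' A ∩ Ioc 0 1
      = (fun x => 2 ^ a * x - 1) ⁻¹' (A ∩ Ioc 0 1) := by
    ext x
    simp only [mem_inter_iff, mem_preimage]
    constructor
    · rintro ⟨⟨hd, hT⟩, hx⟩
      rw [p2dT, hd] at hT
      exact ⟨hT, (p2dD1_eq_iff ha hx.1).1 hd⟩
    · rintro ⟨hT, hI⟩
      have h2a : (2 : ℝ) ≤ 2 ^ a := le_self_pow₀ one_le_two ha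
      have hx : x ∈ Ioc (0 : ℝ) 1 := by
        obtain ⟨h1, h2⟩ := hI
        constructor <;> nlinarith
      have hd := (p2dD1_eq_iff ha hx.1).2 hI
      exact ⟨⟨hd, by rwa [p2dT, hd]⟩, hx⟩
  have hscale : ENNReal.ofReal |((2 : ℝ) ^ a)⁻¹| = 2⁻¹ ^ a := by
    rw [abs_of_pos (by positivity), ← inv_pow, ENNReal.ofReal_pow (by norm_num),
      ENNReal.ofReal_inv_of_pos two_pos, ENNReal.ofReal_ofNat]
  rw [Measure.restrict_apply' measurableSet_Ioc, Measure.restrict_apply' measurableSet_Ioc, hcyl,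
    volume_preimage_mul_left_sub (by positivity), hscale]

theorem measurePreserving_p2dT :
    MeasurePreserving p2dT (volume.restrict (Ioc (0 : ℝ) 1)) (volume.restrict (Ioc (0 : ℝ) 1)) := by
  refine ⟨measurable_p2dT, Measure.ext fun A hA => ?_⟩
  set μ := volume.restrict (Ioc (0 : ℝ) 1)
  have hpart : p2dT ⁻¹' A = ⋃ a : ℕ, p2dD1 ⁻¹' {a} ∩ p2dT ⁻¹' A := by
    rw [← iUnion_inter, ← preimage_iUnion, iUnion_of_singleton, preimage_univ, univ_inter]
  have hdisj : Pairwise (Function.onFun Disjoint fun a : ℕ => p2dD1 ⁻¹' {a} ∩ p2dT ⁻¹' A) :=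
    fun a b hab => (pairwise_disjoint_fiber p2dD1 hab).mono inter_subset_left inter_subset_left
  have hmeas (a : ℕ) : MeasurableSet (p2dD1 ⁻¹' {a} ∩ p2dT ⁻¹' A) :=
    (measurable_p2dD1 (measurableSet_singleton a)).inter (measurable_p2dT hA)
  have hzero : μ (p2dD1 ⁻¹' {0} ∩ p2dT ⁻¹' A) = 0 := by
    rw [Measure.restrict_apply' measurableSet_Ioc]
    exact measure_mono_null (fun x ⟨⟨hd, _⟩, hx⟩ => absurd hd (p2dD1_ne_zero hx)) measure_empty
  calc μ.map p2dT A = ∑' a : ℕ, μ (p2dD1 ⁻¹' {a} ∩ p2dT ⁻¹' A) := by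
        rw [Measure.map_apply measurable_p2dT hA, ← measure_iUnion hdisj hmeas, ← hpart]
    _ = ∑' b : ℕ, 2⁻¹ ^ (b + 1) * μ A := by
        rw [tsum_eq_zero_add' ENNReal.summable, hzero, zero_add]
        exact tsum_congr fun b => restrict_Ioc_p2dD1_inter_preimage_p2dT b.succ_ne_zero
    _ = μ A := by
        rw [ENNReal.tsum_mul_right, ENNReal.tsum_geometric_add_one, ENNReal.one_sub_inv_two,
          inv_inv, ENNReal.inv_mul_cancel (by norm_num) (by norm_num), one_mul]

theorem restrict_Ioc_setOf_p2dD1_iterate_eq {k : ℕ} {m : Fin k → ℕ} (hm : StrictMono m)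
    {a : Fin k → ℕ} (ha : ∀ i, a i ≠ 0) :
    volume.restrict (Ioc (0 : ℝ) 1) {x | ∀ i, p2dD1 (p2dT^[m i] x) = a i} = 2⁻¹ ^ ∑ i, a i := by
  induction k with
  | zero => simp [Real.volume_Ioc]
  | succ k ih =>
    set j := m 0
    have hgap (i : Fin k) : j + 1 ≤ m i.succ := hm (Fin.succ_pos i)
    set m' : Fin k → ℕ := fun i => m i.succ - (j + 1)
    have hm' : StrictMono m' := fun i i' h =>
      Nat.sub_lt_sub_right (hgap i) (hm (Fin.succ_lt_succ_iff.2 h))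
    have hiter (i : Fin k) (x : ℝ) : p2dT^[m i.succ] x = p2dT^[m' i] (p2dT (p2dT^[j] x)) := by
      rw [← Function.iterate_succ_apply, ← Function.iterate_add_apply]
      congr 1
      simp only [m']
      have := hgap i
      omega
    set B := {z | ∀ i, p2dD1 (p2dT^[m' i] z) = a i.succ}
    have hB : MeasurableSet B := by
      simp only [B, ofPred_forall]
      exact .iInter fun i =>
        measurableSet_eq_fun (measurable_p2dD1.comp (measurable_p2dT.iterate _)) measurable_const
    have hsplit : {x | ∀ i, p2dD1 (p2dT^[m i] x) = a i}
        = p2dT^[j] ⁻¹' (p2dD1 ⁻¹' {a 0} ∩ p2dT ⁻¹' B) := by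
      ext x
      simp only [mem_ofPred_eq, Fin.forall_fin_succ, hiter, mem_preimage, mem_inter_iff,
        mem_singleton_iff, B]
      rfl
    have hmeas : MeasurableSet (p2dD1 ⁻¹' {a 0} ∩ p2dT ⁻¹' B) :=
      (measurable_p2dD1 (measurableSet_singleton _)).inter (measurable_p2dT hB)
    rw [hsplit, (measurePreserving_p2dT.iterate j).measure_preimage hmeas.nullMeasurableSet,
      restrict_Ioc_p2dD1_inter_preimage_p2dT (ha 0), ih hm' fun i => ha i.succ,
      Fin.sum_univ_succ, pow_add]

/-- the digits are i.i.d.: finite-dimensional distributions factorize. -/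
theorem p2d_digits_iid (k : ℕ) (n : Fin k → ℕ) (a : Fin k → ℕ)
    (hn : StrictMono n) (hn1 : ∀ i, 1 ≤ n i) (ha : ∀ i, 1 ≤ a i) :
    volume {x : ℝ | x ∈ Set.Ioc (0:ℝ) 1 ∧ ∀ i : Fin k, p2dDigit (n i) x = a i}
      = (2 : ENNReal) ^ (-(∑ i : Fin k, (a i : ℤ))) := by
  have hm : StrictMono fun i => n i - 1 := fun i j h => Nat.sub_lt_sub_right (hn1 i) (hn h)
  calc volume {x : ℝ | x ∈ Ioc (0:ℝ) 1 ∧ ∀ i, p2dDigit (n i) x = a i}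
      = volume.restrict (Ioc (0 : ℝ) 1) {x | ∀ i, p2dD1 (p2dT^[n i - 1] x) = a i} := by
        rw [Measure.restrict_apply' measurableSet_Ioc, inter_comm]
        rfl
    _ = 2⁻¹ ^ ∑ i, a i :=
        restrict_Ioc_setOf_p2dD1_iterate_eq hm fun i => Nat.one_le_iff_ne_zero.1 (ha i)
    _ = 2 ^ (-(∑ i, (a i : ℤ))) := by
        rw [← Nat.cast_sum, ENNReal.zpow_neg, zpow_natCast, ENNReal.inv_pow]
end

section
/- For almost every x∈(0,1] (with respect to Lebesgue measure), lim_{n→∞} L_n(x)/log_2 n = 1, where L_n(x)=max{d_i(x):1≤i≤n}. -/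
/-!
On each interval `(2^-(j+1), 2^-j]` the first digit is `j + 1` and `T` is the full affine branch
`x ↦ 2^(j+1) x - 1` onto `(0, 1]`. Hence Lebesgue measure on `(0, 1]` is `T`-invariant and the
digits behave like i.i.d. variables with `P(d > m) = 2^-m`. For `c > 1`,
`P(d_n > c log₂ n) ≤ 2 n^-c` is summable, and for `0 ≤ c < 1`,
`P(L_n ≤ c log₂ n) ≤ (1 - n^-c)^n ≤ exp(-n^(1-c))` is summable. By Borel–Cantelli, almost surely
`d_n ≤ c log₂ n` eventually (so `L_n ≤ c' log₂ n` eventually for every `c' > c`, as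
`log₂ n → ∞`) and `L_n > c log₂ n` eventually; let `c → 1` along a sequence.
-/

open MeasureTheory Filter Set Real

open scoped ENNReal Nat Topology

local notation "μ₁" => volume.restrict (Ioc (0 : ℝ) 1)

def p2dCylinder (j : ℕ) : Set ℝ := Ioc ((2 : ℝ) ^ (j + 1))⁻¹ ((2 : ℝ) ^ j)⁻¹

lemma mem_p2dCylinder_iff {j : ℕ} {x : ℝ} :
    x ∈ p2dCylinder j ↔ 2 ^ (j + 1) * x - 1 ∈ Ioc (0 : ℝ) 1 := by
  have h : (0 : ℝ) < 2 ^ (j + 1) := by positivity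
  have e : ((2 : ℝ) ^ j)⁻¹ = 2 / 2 ^ (j + 1) := by
    rw [pow_succ, div_mul_cancel_right₀ two_ne_zero]
  rw [p2dCylinder, e, mem_Ioc, mem_Ioc, inv_lt_iff_one_lt_mul₀' h, le_div_iff₀' h, sub_pos,
    sub_le_iff_le_add, one_add_one_eq_two]

lemma exists_mem_p2dCylinder {x : ℝ} (hx : x ∈ Ioc (0 : ℝ) 1) : ∃ j, x ∈ p2dCylinder j := by
  obtain ⟨j, hj, hj'⟩ := exists_nat_pow_near (one_le_inv₀ hx.1 |>.2 hx.2) one_lt_two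
  exact ⟨j, (inv_lt_comm₀ (by positivity) hx.1).2 hj', (le_inv_comm₀ hx.1 (by positivity)).2 hj⟩

lemma p2dD1_eq_of_mem_p2dCylinder {j : ℕ} {x : ℝ} (hx : x ∈ p2dCylinder j) :
    p2dD1 x = j + 1 := by
  have hx0 : 0 < x := lt_trans (by positivity) hx.1
  have hfloor : ⌊-logb 2 x⌋ = j := by
    rw [Int.floor_eq_iff, ← logb_inv, Int.cast_natCast,
      le_logb_iff_rpow_le one_lt_two (inv_pos.2 hx0),
      logb_lt_iff_lt_rpow one_lt_two (inv_pos.2 hx0), ← Nat.cast_add_one, rpow_natCast,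
      rpow_natCast]
    exact ⟨(le_inv_comm₀ hx0 (by positivity)).1 hx.2, (inv_lt_comm₀ hx0 (by positivity)).2 hx.1⟩
  simp [p2dD1, hfloor]

lemma p2dT_eq_of_mem_p2dCylinder {j : ℕ} {x : ℝ} (hx : x ∈ p2dCylinder j) :
    p2dT x = 2 ^ (j + 1) * x - 1 := by
  rw [p2dT, p2dD1_eq_of_mem_p2dCylinder hx]

lemma p2dCylinder_inter_preimage_p2dT (j : ℕ) (B : Set ℝ) :
    p2dCylinder j ∩ p2dT ⁻¹' B = (fun x => 2 ^ (j + 1) * x - 1) ⁻¹' (B ∩ Ioc 0 1) := by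
  ext x
  constructor
  · rintro ⟨hj, hB⟩
    exact ⟨by rwa [mem_preimage, p2dT_eq_of_mem_p2dCylinder hj] at hB, mem_p2dCylinder_iff.1 hj⟩
  · rintro ⟨hB, hI⟩
    have hj := mem_p2dCylinder_iff.2 hI
    exact ⟨hj, by rwa [mem_preimage, p2dT_eq_of_mem_p2dCylinder hj]⟩

lemma volume_p2dCylinder_inter_preimage_p2dT (j : ℕ) (B : Set ℝ) :
    volume (p2dCylinder j ∩ p2dT ⁻¹' B) = ENNReal.ofReal ((2 : ℝ) ^ (j + 1))⁻¹ * μ₁ B := by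
  have h : (fun x : ℝ => 2 ^ (j + 1) * x - 1) = (· + (-1)) ∘ (fun x => 2 ^ (j + 1) * x) := by
    ext; simp [sub_eq_add_neg]
  rw [p2dCylinder_inter_preimage_p2dT, h, preimage_comp,
    Real.volume_preimage_mul_left (by positivity), measure_preimage_add_right,
    Measure.restrict_apply' measurableSet_Ioc, abs_of_pos (by positivity)]

lemma sum_range_inv_two_pow_succ (m : ℕ) :
    ∑ j ∈ Finset.range m, ((2 : ℝ) ^ (j + 1))⁻¹ = 1 - ((2 : ℝ) ^ m)⁻¹ := by
  induction m with
  | zero => simp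
  | succ m ih =>
    rw [Finset.sum_range_succ, ih, pow_succ]
    field_simp
    ring

lemma measure_setOf_p2dD1_le_inter_preimage_p2dT (m : ℕ) (B : Set ℝ) :
    μ₁ ({x | p2dD1 x ≤ m} ∩ p2dT ⁻¹' B) ≤ ENNReal.ofReal (1 - ((2 : ℝ) ^ m)⁻¹) * μ₁ B := by
  have hcover : ({x | p2dD1 x ≤ m} ∩ p2dT ⁻¹' B) ∩ Ioc 0 1
      ⊆ ⋃ j ∈ Finset.range m, p2dCylinder j ∩ p2dT ⁻¹' B := by
    rintro x ⟨⟨hm, hB⟩, hx⟩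
    obtain ⟨j, hj⟩ := exists_mem_p2dCylinder hx
    have hm : p2dD1 x ≤ m := hm
    rw [p2dD1_eq_of_mem_p2dCylinder hj] at hm
    exact mem_biUnion (Finset.mem_range.2 hm) ⟨hj, hB⟩
  calc μ₁ ({x | p2dD1 x ≤ m} ∩ p2dT ⁻¹' B)
      ≤ ∑ j ∈ Finset.range m, volume (p2dCylinder j ∩ p2dT ⁻¹' B) := by
        rw [Measure.restrict_apply' measurableSet_Ioc]
        exact (measure_mono hcover).trans (measure_biUnion_finset_le _ _)
    _ = ENNReal.ofReal (1 - ((2 : ℝ) ^ m)⁻¹) * μ₁ B := by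
        simp_rw [volume_p2dCylinder_inter_preimage_p2dT, ← Finset.sum_mul]
        rw [← ENNReal.ofReal_sum_of_nonneg (fun j _ => by positivity), sum_range_inv_two_pow_succ]

lemma measure_preimage_p2dT_le (B : Set ℝ) : μ₁ (p2dT ⁻¹' B) ≤ μ₁ B := by
  have hmono : Monotone fun m : ℕ => {x | p2dD1 x ≤ m} ∩ p2dT ⁻¹' B :=
    fun m m' h => inter_subset_inter_left _ fun x (hx : p2dD1 x ≤ m) => hx.trans h
  have hcover : ⋃ m : ℕ, {x : ℝ | p2dD1 x ≤ m} = univ :=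
    iUnion_eq_univ_iff.2 fun x => ⟨p2dD1 x, (le_rfl : p2dD1 x ≤ p2dD1 x)⟩
  -- Continuity from below holds for arbitrary sets, so `B` need not be measurable.
  calc μ₁ (p2dT ⁻¹' B) = ⨆ m : ℕ, μ₁ ({x | p2dD1 x ≤ m} ∩ p2dT ⁻¹' B) := by
        rw [← hmono.measure_iUnion, ← iUnion_inter, hcover, univ_inter]
    _ ≤ μ₁ B := by
        refine iSup_le fun m => (measure_setOf_p2dD1_le_inter_preimage_p2dT m B).trans ?_
        exact mul_le_of_le_one_left' (ENNReal.ofReal_le_one.2 (by simp))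

lemma measure_preimage_iterate_p2dT_le (n : ℕ) (B : Set ℝ) : μ₁ (p2dT^[n] ⁻¹' B) ≤ μ₁ B := by
  induction n with
  | zero => rfl
  | succ n ih =>
    rw [Function.iterate_succ, preimage_comp]
    exact (measure_preimage_p2dT_le _).trans ih

lemma measure_setOf_lt_p2dD1_le (m : ℕ) :
    μ₁ {x | m < p2dD1 x} ≤ ENNReal.ofReal ((2 : ℝ) ^ m)⁻¹ := by
  have hsub : {x | m < p2dD1 x} ∩ Ioc 0 1 ⊆ Ioc 0 ((2 : ℝ) ^ m)⁻¹ := by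
    rintro x ⟨hm, hx⟩
    obtain ⟨j, hj⟩ := exists_mem_p2dCylinder hx
    have hm : m < p2dD1 x := hm
    rw [p2dD1_eq_of_mem_p2dCylinder hj, Nat.lt_succ_iff] at hm
    exact ⟨hx.1, hj.2.trans (inv_anti₀ (by positivity) (pow_le_pow_right₀ one_le_two hm))⟩
  rw [Measure.restrict_apply' measurableSet_Ioc]
  exact (measure_mono hsub).trans (by rw [Real.volume_Ioc, sub_zero])

lemma measure_setOf_lt_p2dDigit_le (n m : ℕ) :
    μ₁ {x | m < p2dDigit (n + 1) x} ≤ ENNReal.ofReal ((2 : ℝ) ^ m)⁻¹ :=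
  (measure_preimage_iterate_p2dT_le n {y | m < p2dD1 y}).trans (measure_setOf_lt_p2dD1_le m)

lemma p2dL_le_iff {n m : ℕ} {x : ℝ} : p2dL n x ≤ m ↔ ∀ i < n, p2dD1 (p2dT^[i] x) ≤ m := by
  simp only [p2dL, Finset.sup_le_iff, Finset.mem_Icc, p2dDigit]
  constructor
  · intro h i hi
    simpa using h (i + 1) (by omega)
  · intro h i hi
    exact h (i - 1) (by omega)

lemma p2dL_succ_le_iff {n m : ℕ} {x : ℝ} :
    p2dL (n + 1) x ≤ m ↔ p2dD1 x ≤ m ∧ p2dL n (p2dT x) ≤ m := by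
  simp only [p2dL_le_iff, Nat.forall_lt_succ_left, Function.iterate_succ_apply,
    Function.iterate_zero_apply]

lemma measure_setOf_p2dL_le (n m : ℕ) :
    μ₁ {x | p2dL n x ≤ m} ≤ ENNReal.ofReal ((1 - ((2 : ℝ) ^ m)⁻¹) ^ n) := by
  induction n with
  | zero =>
    rw [pow_zero, ENNReal.ofReal_one]
    exact (measure_mono (subset_univ _)).trans_eq (by simp)
  | succ n ih =>
    have hset : {x | p2dL (n + 1) x ≤ m}
        = {x | p2dD1 x ≤ m} ∩ p2dT ⁻¹' {x | p2dL n x ≤ m} := by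
      ext x; exact p2dL_succ_le_iff
    have ht : 0 ≤ 1 - ((2 : ℝ) ^ m)⁻¹ :=
      sub_nonneg.2 (inv_le_one_of_one_le₀ (one_le_pow₀ one_le_two))
    calc μ₁ {x | p2dL (n + 1) x ≤ m}
        ≤ ENNReal.ofReal (1 - ((2 : ℝ) ^ m)⁻¹) * μ₁ {x | p2dL n x ≤ m} :=
          hset ▸ measure_setOf_p2dD1_le_inter_preimage_p2dT m _
      _ ≤ ENNReal.ofReal (1 - ((2 : ℝ) ^ m)⁻¹) * ENNReal.ofReal ((1 - ((2 : ℝ) ^ m)⁻¹) ^ n) := by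
          gcongr
      _ = ENNReal.ofReal ((1 - ((2 : ℝ) ^ m)⁻¹) ^ (n + 1)) := by
          rw [← ENNReal.ofReal_mul ht, pow_succ']

lemma ae_eventually_notMem_of_summable {α : Type*} [MeasurableSpace α] {μ : Measure α}
    {s : ℕ → Set α} {g : ℕ → ℝ} (hg : Summable g)
    (h : ∀ᶠ n in atTop, μ (s n) ≤ ENNReal.ofReal (g n)) :
    ∀ᵐ x ∂μ, ∀ᶠ n in atTop, x ∉ s n := by
  obtain ⟨N, hN⟩ := eventually_atTop.1 h
  have hsum : ∑' n, μ (s (n + N)) ≠ ∞ :=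
    ne_top_of_le_ne_top ((summable_nat_add_iff N).2 hg).tsum_ofReal_ne_top
      (ENNReal.tsum_le_tsum fun n => hN _ (Nat.le_add_left N n))
  filter_upwards [ae_eventually_notMem hsum] with x hx
  rwa [← map_add_atTop_eq_nat N]

lemma summable_exp_neg_rpow {δ : ℝ} (hδ : 0 < δ) :
    Summable fun n : ℕ => exp (-(n : ℝ) ^ δ) := by
  obtain ⟨k, hk⟩ := exists_nat_gt (2 / δ)
  have hδk : 2 ≤ δ * k := by rw [div_lt_iff₀ hδ] at hk; linarith
  refine ((summable_nat_rpow.2 (by norm_num : (-2 : ℝ) < -1)).mul_left (k ! : ℝ))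
    |>.of_norm_bounded_eventually_nat ?_
  filter_upwards [eventually_ge_atTop 1] with n hn
  have hn' : (1 : ℝ) ≤ n := by exact_mod_cast hn
  have hy : 0 < (n : ℝ) ^ δ := by positivity
  rw [Real.norm_of_nonneg (exp_pos _).le]
  calc exp (-(n : ℝ) ^ δ) ≤ k ! / ((n : ℝ) ^ δ) ^ k := by
        rw [exp_neg, ← inv_div]
        exact inv_anti₀ (by positivity) (pow_div_factorial_le_exp _ hy.le k)
    _ = k ! * ((n : ℝ) ^ (δ * k))⁻¹ := by
        rw [rpow_mul (by positivity), rpow_natCast, div_eq_mul_inv]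
    _ ≤ k ! * (n : ℝ) ^ (-2 : ℝ) := by
        rw [rpow_neg (by positivity)]
        gcongr

lemma rpow_neg_le_inv_pow_floor {b y : ℝ} (hb : 1 ≤ b) (hy : 0 ≤ y) :
    b ^ (-y) ≤ (b ^ ⌊y⌋₊)⁻¹ := by
  rw [← rpow_natCast, ← rpow_neg (by positivity)]
  exact rpow_le_rpow_of_exponent_le hb (neg_le_neg (Nat.floor_le hy))

lemma inv_pow_floor_le_mul_rpow_neg {b : ℝ} (hb : 1 ≤ b) (y : ℝ) :
    (b ^ ⌊y⌋₊)⁻¹ ≤ b * b ^ (-y) := by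
  calc (b ^ ⌊y⌋₊)⁻¹ = b ^ (-(⌊y⌋₊ : ℝ)) := by rw [rpow_neg (by positivity), rpow_natCast]
    _ ≤ b ^ (1 + -y) := rpow_le_rpow_of_exponent_le hb (by linarith [Nat.lt_floor_add_one y])
    _ = b * b ^ (-y) := by rw [rpow_add (by positivity), rpow_one]

lemma two_rpow_neg_mul_logb (c : ℝ) {x : ℝ} (hx : 0 < x) :
    (2 : ℝ) ^ (-(c * logb 2 x)) = x ^ (-c) := by
  rw [← neg_mul, mul_comm, rpow_mul zero_le_two, rpow_logb zero_lt_two (by norm_num) hx]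

lemma monotone_logb_natCast : Monotone fun n : ℕ => logb 2 n := by
  intro n m h
  rcases Nat.eq_zero_or_pos n with rfl | hn
  · simpa [logb] using div_nonneg (log_natCast_nonneg m) (log_nonneg one_le_two)
  · exact logb_le_logb_of_le one_lt_two (by exact_mod_cast hn) (by exact_mod_cast h)

lemma tendsto_logb_natCast_atTop : Tendsto (fun n : ℕ => logb 2 n) atTop atTop :=
  (tendsto_logb_atTop one_lt_two).comp tendsto_natCast_atTop_atTop

lemma ae_eventually_p2dDigit_le {c : ℝ} (hc : 1 < c) :
    ∀ᵐ x ∂μ₁, ∀ᶠ n in atTop, (p2dDigit n x : ℝ) ≤ c * logb 2 n := by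
  have hbound : ∀ n : ℕ, n ≥ 1 →
      μ₁ {x | c * logb 2 n < p2dDigit n x} ≤ ENNReal.ofReal (2 * (n : ℝ) ^ (-c)) := by
    intro n hn
    obtain ⟨k, rfl⟩ := Nat.exists_eq_add_of_le' hn
    have hy : 0 ≤ c * logb 2 (k + 1 : ℕ) :=
      mul_nonneg (by linarith) (logb_nonneg one_lt_two (by simp))
    have hsub : {x | c * logb 2 (k + 1 : ℕ) < p2dDigit (k + 1) x}
        ⊆ {x | ⌊c * logb 2 (k + 1 : ℕ)⌋₊ < p2dDigit (k + 1) x} :=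
      fun x hx => (Nat.floor_lt hy).2 hx
    refine (measure_mono hsub).trans <| (measure_setOf_lt_p2dDigit_le k _).trans <|
      ENNReal.ofReal_le_ofReal ?_
    rw [← two_rpow_neg_mul_logb c (by positivity)]
    exact inv_pow_floor_le_mul_rpow_neg one_le_two _
  have hsum : Summable fun n : ℕ => 2 * (n : ℝ) ^ (-c) :=
    (summable_nat_rpow.2 (by linarith)).mul_left 2
  filter_upwards [ae_eventually_notMem_of_summable hsum (eventually_atTop.2 ⟨1, hbound⟩)]
    with x hx
  exact hx.mono fun n hn => not_lt.1 hn

lemma ae_eventually_lt_p2dL {c : ℝ} (hc0 : 0 ≤ c) (hc : c < 1) :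
    ∀ᵐ x ∂μ₁, ∀ᶠ n : ℕ in atTop, c * logb 2 n < p2dL n x := by
  have hbound : ∀ n : ℕ, n ≥ 1 →
      μ₁ {x | (p2dL n x : ℝ) ≤ c * logb 2 n} ≤ ENNReal.ofReal (exp (-(n : ℝ) ^ (1 - c))) := by
    intro n hn
    have hn' : (1 : ℝ) ≤ n := by exact_mod_cast hn
    have hy : 0 ≤ c * logb 2 n := mul_nonneg hc0 (logb_nonneg one_lt_two hn')
    have hsub : {x | (p2dL n x : ℝ) ≤ c * logb 2 n} ⊆ {x | p2dL n x ≤ ⌊c * logb 2 n⌋₊} :=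
      fun x hx => Nat.le_floor hx
    refine (measure_mono hsub).trans <| (measure_setOf_p2dL_le n _).trans <|
      ENNReal.ofReal_le_ofReal ?_
    have ht : (n : ℝ) ^ (1 - c) / n ≤ ((2 : ℝ) ^ ⌊c * logb 2 n⌋₊)⁻¹ := by
      rw [← rpow_sub_one (by positivity), sub_sub_cancel_left,
        ← two_rpow_neg_mul_logb c (by positivity)]
      exact rpow_neg_le_inv_pow_floor one_le_two hy
    have hle : (n : ℝ) ^ (1 - c) ≤ n :=
      (rpow_le_rpow_of_exponent_le hn' (by linarith)).trans_eq (rpow_one _)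
    calc (1 - ((2 : ℝ) ^ ⌊c * logb 2 n⌋₊)⁻¹) ^ n ≤ (1 - (n : ℝ) ^ (1 - c) / n) ^ n :=
          pow_le_pow_left₀ (sub_nonneg.2 (inv_le_one_of_one_le₀ (one_le_pow₀ one_le_two)))
            (by linarith) n
      _ ≤ exp (-(n : ℝ) ^ (1 - c)) := one_sub_div_pow_le_exp_neg hle
  filter_upwards [ae_eventually_notMem_of_summable (summable_exp_neg_rpow (sub_pos.2 hc))
    (eventually_atTop.2 ⟨1, hbound⟩)] with x hx
  exact hx.mono fun n hn => not_le.1 hn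

lemma eventually_sup_Iic_le {a : ℕ → ℕ} {v : ℕ → ℝ} (hv : Monotone v)
    (hv' : Tendsto v atTop atTop) {c c' : ℝ} (hc : 0 ≤ c) (hcc' : c < c')
    (h : ∀ᶠ n in atTop, (a n : ℝ) ≤ c * v n) :
    ∀ᶠ n in atTop, (((Finset.Iic n).sup a : ℕ) : ℝ) ≤ c' * v n := by
  obtain ⟨N, hN⟩ := eventually_atTop.1 h
  set C : ℕ := (Finset.Iic N).sup a
  filter_upwards [eventually_ge_atTop N, hv'.eventually_ge_atTop 0,
    hv'.eventually_ge_atTop (C / (c' - c))] with n hn hv0 hvC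
  obtain ⟨i, hi, hsup⟩ := Finset.exists_mem_eq_sup (Finset.Iic n) Finset.nonempty_Iic a
  rw [hsup]
  rcases le_total i N with hiN | hNi
  · calc (a i : ℝ) ≤ C := Nat.cast_le.2 (Finset.le_sup (Finset.mem_Iic.2 hiN))
      _ ≤ (c' - c) * v n := (div_le_iff₀' (sub_pos.2 hcc')).1 hvC
      _ ≤ c' * v n := by nlinarith
  · calc (a i : ℝ) ≤ c * v i := hN i hNi
      _ ≤ c * v n := mul_le_mul_of_nonneg_left (hv (Finset.mem_Iic.1 hi)) hc
      _ ≤ c' * v n := mul_le_mul_of_nonneg_right hcc'.le hv0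

lemma ae_eventually_p2dL_le {c : ℝ} (hc : 1 < c) :
    ∀ᵐ x ∂μ₁, ∀ᶠ n in atTop, (p2dL n x : ℝ) ≤ c * logb 2 n := by
  filter_upwards [ae_eventually_p2dDigit_le (c := (1 + c) / 2) (by linarith)] with x hx
  filter_upwards [eventually_sup_Iic_le monotone_logb_natCast tendsto_logb_natCast_atTop
    (c' := c) (by linarith) (by linarith) hx] with n hn
  have hIcc : Finset.Icc 1 n ⊆ Finset.Iic n :=
    fun i hi => Finset.mem_Iic.2 (Finset.mem_Icc.1 hi).2
  exact (Nat.cast_le.2 (Finset.sup_mono hIcc)).trans hn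

lemma tendsto_div_nhds_one_of_forall_eventually {ι : Type*} {l : Filter ι} {u v : ι → ℝ}
    {ε : ℕ → ℝ} (hε : Tendsto ε atTop (𝓝 0)) (hv : ∀ᶠ i in l, 0 < v i)
    (hlow : ∀ K, ∀ᶠ i in l, (1 - ε K) * v i ≤ u i)
    (hup : ∀ K, ∀ᶠ i in l, u i ≤ (1 + ε K) * v i) :
    Tendsto (fun i => u i / v i) l (𝓝 1) := by
  refine tendsto_order.2 ⟨fun a ha => ?_, fun a ha => ?_⟩
  · obtain ⟨K, hK⟩ := (hε.eventually_lt_const (sub_pos.2 ha)).exists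
    filter_upwards [hv, hlow K] with i hvi hi
    rw [lt_div_iff₀ hvi]
    nlinarith
  · obtain ⟨K, hK⟩ := (hε.eventually_lt_const (sub_pos.2 ha)).exists
    filter_upwards [hv, hup K] with i hvi hi
    rw [div_lt_iff₀ hvi]
    nlinarith

/-- a.e. growth rate of maximal digits. -/
theorem p2d_Ln_ae :
    ∀ᵐ x ∂(volume.restrict (Set.Ioc (0:ℝ) 1)),
      Tendsto (fun n : ℕ => (p2dL n x : ℝ) / Real.logb 2 n) atTop (nhds 1) := by
  have hε_pos (K : ℕ) : 0 < 1 / ((K : ℝ) + 1) := Nat.one_div_pos_of_nat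
  have hε_le_one (K : ℕ) : 1 / ((K : ℝ) + 1) ≤ 1 :=
    (div_le_one (by positivity)).2 (le_add_of_nonneg_left K.cast_nonneg)
  have hlow := ae_all_iff.2 fun K : ℕ =>
    ae_eventually_lt_p2dL (sub_nonneg.2 (hε_le_one K)) (sub_lt_self 1 (hε_pos K))
  have hup := ae_all_iff.2 fun K : ℕ =>
    ae_eventually_p2dL_le (lt_add_of_pos_right 1 (hε_pos K))
  filter_upwards [hlow, hup] with x hxl hxu
  exact tendsto_div_nhds_one_of_forall_eventually tendsto_one_div_add_atTop_nhds_zero_nat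
    (tendsto_logb_natCast_atTop.eventually_gt_atTop 0) (fun K => (hxl K).mono fun _ h => h.le) hxu
end

section
/- The Hausdorff dimension of {x∈(0,1]: d_n(x)≥αn for infinitely many n} is at most s(α), for any α>0, where s(α) solves 2^{sα}(2^s−1)=1. -/
open MeasureTheory Filter Set Real

open scoped ENNReal Topology

/-!
If `d_n(x) ≥ α n`, then `T^[n-1] x ≤ 2 ^ (1 - α n)`, so `x` lies in the interval of points sharing
its first `n - 1` digits `d₁, …, d_{n-1}` whose `(n-1)`-st image is at most `2 ^ (1 - α n)`; this
interval has length `2 ^ (1 - α n - d₁ - ⋯ - d_{n-1})`. Summing the `τ`-th powers of these lengths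
over all digit strings gives a geometric series of ratio `2 ^ (-τ (α + 1)) / (1 - 2 ^ (-τ))`, which
is `< 1` exactly when `2 ^ (-τ (α + 1)) + 2 ^ (-τ) < 1`. The equation for `s` says
`2 ^ (-s (α + 1)) + 2 ^ (-s) = 1`, so this holds for every `τ > s`, and the Hausdorff–Cantelli
lemma gives `μH[τ] F(α) = 0`.
-/

theorem ENNReal.tsum_fin_pi_prod {ι : Type*} (f : ι → ℝ≥0∞) (k : ℕ) :
    ∑' v : Fin k → ι, ∏ i, f (v i) = (∑' m, f m) ^ k := by
  induction k with
  | zero => simp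
  | succ k ih =>
    rw [← (Fin.consEquiv fun _ => ι).tsum_eq, ENNReal.tsum_prod', pow_succ', ← ih,
      ← ENNReal.tsum_mul_right]
    refine tsum_congr fun m => ?_
    rw [← ENNReal.tsum_mul_left]
    refine tsum_congr fun v => ?_
    simp [Fin.consEquiv, Fin.prod_univ_succ]

theorem MeasureTheory.hausdorffMeasure_setOf_frequently_mem_eq_zero {X ι : Type*}
    [EMetricSpace X] [MeasurableSpace X] [BorelSpace X] [Countable ι] {d : ℝ} (hd : 0 < d)
    {E : ι → Set X} (hE : ∑' i, Metric.ediam (E i) ^ d ≠ ∞) :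
    μH[d] {x | ∃ᶠ i in cofinite, x ∈ E i} = 0 := by
  set tail : Finset ι → ℝ≥0∞ := fun S => ∑' i : {i // i ∉ S}, Metric.ediam (E i) ^ d
  have htail : Tendsto tail atTop (𝓝 0) := ENNReal.tendsto_tsum_compl_atTop_zero hE
  have hr : Tendsto (fun S => tail S ^ d⁻¹) atTop (𝓝 0) := by
    simpa [ENNReal.zero_rpow_of_pos (inv_pos.2 hd)] using htail.ennrpow_const d⁻¹
  have hdiam : ∀ S, ∀ i : {i // i ∉ S}, Metric.ediam (E i) ≤ tail S ^ d⁻¹ := fun S i =>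
    (ENNReal.le_rpow_inv_iff hd).2 (ENNReal.le_tsum (f := fun i : {i // i ∉ S} => _) i)
  have hcover : ∀ S : Finset ι, {x | ∃ᶠ i in cofinite, x ∈ E i} ⊆ ⋃ i : {i // i ∉ S}, E i := by
    intro S x hx
    obtain ⟨i, hiE, hiS⟩ := (frequently_cofinite_iff_infinite.1 hx).exists_notMem_finset S
    exact mem_iUnion.2 ⟨⟨i, hiS⟩, hiE⟩
  refine le_antisymm ?_ zero_le
  calc μH[d] {x | ∃ᶠ i in cofinite, x ∈ E i}
      ≤ liminf tail atTop :=
        Measure.hausdorffMeasure_le_liminf_tsum d _ _ hr (fun S (i : {i // i ∉ S}) => E i)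
          (Eventually.of_forall hdiam) (Eventually.of_forall hcover)
    _ = 0 := htail.liminf_eq

section Exponent

variable {α s : ℝ}

lemma pos_of_two_rpow_mul_two_rpow_sub_one_eq_one (heq : (2 : ℝ) ^ (s * α) * (2 ^ s - 1) = 1) :
    0 < s := by
  have h : 0 < (2 : ℝ) ^ s - 1 :=
    pos_of_mul_pos_right (by rw [heq]; exact one_pos) (rpow_nonneg zero_le_two _)
  by_contra! hs
  linarith [rpow_le_one_of_one_le_of_nonpos one_le_two hs]

lemma two_rpow_neg_add_two_rpow_neg_eq_one (heq : (2 : ℝ) ^ (s * α) * (2 ^ s - 1) = 1) :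
    (2 : ℝ) ^ (-(s * (α + 1))) + 2 ^ (-s) = 1 := by
  have hsplit : (2 : ℝ) ^ (-(s * (α + 1))) = 2 ^ (-(s * α)) * 2 ^ (-s) := by
    rw [← rpow_add two_pos]; ring_nf
  have hinv : (2 : ℝ) ^ (-(s * α)) = 2 ^ s - 1 := by
    rw [rpow_neg zero_le_two]; exact inv_eq_of_mul_eq_one_right heq
  have hcancel : (2 : ℝ) ^ s * 2 ^ (-s) = 1 := by rw [← rpow_add two_pos]; simp
  rw [hsplit, hinv]
  linear_combination hcancel

lemma two_rpow_neg_add_two_rpow_neg_lt_one (hα : 0 < α + 1)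
    (heq : (2 : ℝ) ^ (s * α) * (2 ^ s - 1) = 1) {τ : ℝ} (hsτ : s < τ) :
    (2 : ℝ) ^ (-(τ * (α + 1))) + 2 ^ (-τ) < 1 :=
  calc (2 : ℝ) ^ (-(τ * (α + 1))) + 2 ^ (-τ) < 2 ^ (-(s * (α + 1))) + 2 ^ (-s) :=
        add_lt_add (rpow_lt_rpow_of_exponent_lt one_lt_two (by nlinarith))
          (rpow_lt_rpow_of_exponent_lt one_lt_two (by linarith))
    _ = 1 := two_rpow_neg_add_two_rpow_neg_eq_one heq

end Exponent

section Digits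

variable {x : ℝ}

lemma floor_neg_logb_two_nonneg (hx : x ∈ Ioc (0 : ℝ) 1) : 0 ≤ ⌊-logb 2 x⌋ :=
  Int.floor_nonneg.2 (neg_nonneg.2 (logb_nonpos one_lt_two hx.1.le hx.2))

lemma one_le_p2dD1 (hx : x ∈ Ioc (0 : ℝ) 1) : 1 ≤ p2dD1 x := by
  have := floor_neg_logb_two_nonneg hx
  rw [p2dD1]
  omega

lemma p2dD1_cast (hx : x ∈ Ioc (0 : ℝ) 1) : (p2dD1 x : ℝ) = ⌊-logb 2 x⌋ + 1 := by
  have := floor_neg_logb_two_nonneg hx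
  rw [p2dD1, ← Int.cast_natCast, Int.toNat_of_nonneg (by omega), Int.cast_add, Int.cast_one]

lemma two_rpow_neg_p2dD1_lt (hx : x ∈ Ioc (0 : ℝ) 1) : (2 : ℝ) ^ (-(p2dD1 x : ℝ)) < x := by
  rw [← lt_logb_iff_rpow_lt one_lt_two hx.1, p2dD1_cast hx]
  linarith [Int.lt_floor_add_one (-logb 2 x)]

lemma le_two_rpow_one_sub_p2dD1 (hx : x ∈ Ioc (0 : ℝ) 1) : x ≤ (2 : ℝ) ^ (1 - (p2dD1 x : ℝ)) := by
  rw [← logb_le_iff_le_rpow one_lt_two hx.1, p2dD1_cast hx]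
  linarith [Int.floor_le (-logb 2 x)]

lemma p2dT_mem_Ioc (hx : x ∈ Ioc (0 : ℝ) 1) : p2dT x ∈ Ioc (0 : ℝ) 1 := by
  have hpow : (2 : ℝ) ^ p2dD1 x = 2 ^ (p2dD1 x : ℝ) := (rpow_natCast 2 _).symm
  have hlo := mul_lt_mul_of_pos_left (two_rpow_neg_p2dD1_lt hx)
    (rpow_pos_of_pos two_pos (p2dD1 x : ℝ))
  have hhi := mul_le_mul_of_nonneg_left (le_two_rpow_one_sub_p2dD1 hx)
    (rpow_nonneg zero_le_two (p2dD1 x : ℝ))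
  rw [← rpow_add two_pos] at hlo hhi
  simp only [add_neg_cancel, rpow_zero, add_sub_cancel, rpow_one] at hlo hhi
  rw [p2dT, hpow]
  constructor <;> linarith

lemma p2dT_iterate_mem_Ioc (hx : x ∈ Ioc (0 : ℝ) 1) (k : ℕ) : p2dT^[k] x ∈ Ioc (0 : ℝ) 1 := by
  induction k with
  | zero => exact hx
  | succ k ih => rw [Function.iterate_succ_apply']; exact p2dT_mem_Ioc ih

end Digits

/-- For `0 < y ≤ 1` and positive `dᵢ`, `p2dInvBranch [d₁, …, dₖ] y` is the point with first digits
`d₁, …, dₖ` whose `k`-th image under `p2dT` is `y`. -/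
noncomputable def p2dInvBranch : List ℕ → ℝ → ℝ
  | [], y => y
  | d :: l, y => (p2dInvBranch l y + 1) / 2 ^ d

lemma p2dInvBranch_eq_add (l : List ℕ) (y : ℝ) :
    p2dInvBranch l y = p2dInvBranch l 0 + y / 2 ^ l.sum := by
  induction l with
  | nil => simp [p2dInvBranch]
  | cons d l ih =>
    simp only [p2dInvBranch, List.sum_cons, pow_add]
    rw [ih]
    field_simp
    ring

lemma p2dInvBranch_digits_iterate (x : ℝ) (k : ℕ) :
    p2dInvBranch (List.ofFn fun i : Fin k => p2dDigit (i + 1) x) (p2dT^[k] x) = x := by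
  induction k generalizing x with
  | zero => rfl
  | succ k ih =>
    rw [List.ofFn_succ, Function.iterate_succ_apply]
    simp only [Fin.val_zero, Fin.val_succ]
    have hdigit : ∀ i : Fin k, p2dDigit (i + 1 + 1) x = p2dDigit (i + 1) (p2dT x) := fun i => by
      simp [p2dDigit, Function.iterate_succ_apply]
    simp only [hdigit, p2dInvBranch, ih]
    simp only [p2dDigit, p2dT, zero_add, Nat.sub_self, Function.iterate_zero_apply]
    field_simp
    ring

noncomputable def p2dInterval (l : List ℕ) (u : ℝ) : Set ℝ :=
  Ioc (p2dInvBranch l 0) (p2dInvBranch l 0 + u / 2 ^ l.sum)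

lemma p2dInvBranch_mem_p2dInterval (l : List ℕ) {y u : ℝ} (hy : y ∈ Ioc 0 u) :
    p2dInvBranch l y ∈ p2dInterval l u := by
  rw [p2dInterval, p2dInvBranch_eq_add l y]
  have h2 : (0 : ℝ) < 2 ^ l.sum := by positivity
  exact ⟨lt_add_of_pos_right _ (div_pos hy.1 h2), by gcongr; exact hy.2⟩

lemma ediam_p2dInterval (l : List ℕ) (u : ℝ) :
    Metric.ediam (p2dInterval l u) = ENNReal.ofReal (u / 2 ^ l.sum) := by
  rw [p2dInterval, Real.ediam_Ioc, add_sub_cancel_left]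

/-- `v` encodes the digit string `v 0 + 1, …, v (k-1) + 1`, so that it ranges over all of
`Fin k → ℕ` while the digits range over the positive integers; `2 ^ (1 - α (k + 1))` bounds
`T^[k] x` once the `(k+1)`-st digit of `x` is at least `α (k + 1)`. -/
noncomputable def p2dCover (α : ℝ) (p : Σ k : ℕ, Fin k → ℕ) : Set ℝ :=
  p2dInterval (List.ofFn fun i => p.2 i + 1) (2 ^ (1 - α * (p.1 + 1)))

lemma mem_p2dCover {α x : ℝ} (hx : x ∈ Ioc (0 : ℝ) 1) {k : ℕ}
    (hk : α * (k + 1) ≤ p2dDigit (k + 1) x) :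
    x ∈ p2dCover α ⟨k, fun i => p2dDigit (i + 1) x - 1⟩ := by
  have hdigits : (List.ofFn fun i : Fin k => p2dDigit (i + 1) x - 1 + 1) =
      List.ofFn fun i : Fin k => p2dDigit (i + 1) x :=
    congrArg _ (funext fun i => Nat.sub_add_cancel (one_le_p2dD1 (p2dT_iterate_mem_Ioc hx i)))
  have hy := p2dT_iterate_mem_Ioc hx k
  have hyle : p2dT^[k] x ≤ 2 ^ (1 - α * (k + 1)) :=
    (le_two_rpow_one_sub_p2dD1 hy).trans
      (rpow_le_rpow_of_exponent_le one_le_two (by rw [p2dDigit, Nat.add_sub_cancel] at hk; linarith))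
  have hmem := p2dInvBranch_mem_p2dInterval (List.ofFn fun i : Fin k => p2dDigit (i + 1) x)
    ⟨hy.1, hyle⟩
  rwa [p2dInvBranch_digits_iterate, ← hdigits] at hmem

lemma setOf_frequently_le_p2dDigit_subset (α : ℝ) :
    {x : ℝ | x ∈ Ioc (0 : ℝ) 1 ∧ ∃ᶠ n in atTop, α * n ≤ (p2dDigit n x : ℝ)} ⊆
      {x | ∃ᶠ p in cofinite, x ∈ p2dCover α p} := by
  rintro x ⟨hx, hfreq⟩
  set f : ℕ → Σ k : ℕ, Fin k → ℕ := fun k => ⟨k, fun i => p2dDigit (i + 1) x - 1⟩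
  have hf : Tendsto (fun n => f (n - 1)) atTop cofinite := by
    have hinj : Function.Injective f := fun a b h => congrArg Sigma.fst h
    exact hinj.tendsto_cofinite.comp (Nat.cofinite_eq_atTop ▸ tendsto_sub_atTop_nat 1)
  refine hf.frequently ((hfreq.and_eventually (eventually_ge_atTop 1)).mono ?_)
  rintro n ⟨hn, hn1⟩
  obtain ⟨k, rfl⟩ : ∃ k, n = k + 1 := ⟨n - 1, by omega⟩
  exact mem_p2dCover hx (by simpa using hn)

lemma p2dCover_length_rpow (α τ : ℝ) {k : ℕ} (v : Fin k → ℕ) :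
    ((2 : ℝ) ^ (1 - α * (k + 1)) / 2 ^ (List.ofFn fun i => v i + 1).sum) ^ τ =
      2 ^ (τ * (1 - α)) * (2 ^ (-(τ * (α + 1)))) ^ k * ∏ i, ((2 : ℝ) ^ (-τ)) ^ v i := by
  have hsum : (((List.ofFn fun i => v i + 1).sum : ℕ) : ℝ) = ∑ i, (v i : ℝ) + k := by
    rw [List.sum_ofFn]; push_cast; rw [Finset.sum_add_distrib]; simp
  rw [Finset.prod_pow_eq_pow_sum, ← rpow_natCast (2 ^ (-τ)),
    ← rpow_natCast (2 ^ (-(τ * (α + 1)))), ← rpow_natCast 2, ← rpow_sub two_pos,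
    ← rpow_mul zero_le_two, ← rpow_mul zero_le_two, ← rpow_mul zero_le_two, ← rpow_add two_pos,
    ← rpow_add two_pos, hsum]
  push_cast
  ring_nf

lemma ediam_p2dCover_rpow (α : ℝ) {τ : ℝ} (hτ : 0 ≤ τ) {k : ℕ} (v : Fin k → ℕ) :
    Metric.ediam (p2dCover α ⟨k, v⟩) ^ τ =
      ENNReal.ofReal (2 ^ (τ * (1 - α))) * ENNReal.ofReal (2 ^ (-(τ * (α + 1)))) ^ k *
        ∏ i, ENNReal.ofReal (2 ^ (-τ)) ^ v i := by
  rw [p2dCover, ediam_p2dInterval, ENNReal.ofReal_rpow_of_nonneg (by positivity) hτ,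
    p2dCover_length_rpow, ENNReal.ofReal_mul (by positivity), ENNReal.ofReal_mul (by positivity),
    ENNReal.ofReal_pow (by positivity), ENNReal.ofReal_prod_of_nonneg (fun _ _ => by positivity)]
  simp only [ENNReal.ofReal_pow (rpow_nonneg zero_le_two _)]

lemma tsum_ediam_p2dCover_rpow_ne_top {α τ : ℝ} (hτ : 0 ≤ τ)
    (hlt : (2 : ℝ) ^ (-(τ * (α + 1))) + 2 ^ (-τ) < 1) :
    ∑' p, Metric.ediam (p2dCover α p) ^ τ ≠ ∞ := by
  set C := ENNReal.ofReal (2 ^ (τ * (1 - α)))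
  set A := ENNReal.ofReal (2 ^ (-(τ * (α + 1))))
  set Q := ENNReal.ofReal (2 ^ (-τ))
  have hratio : A * (1 - Q)⁻¹ < 1 := by
    have hq : 0 < 1 - (2 : ℝ) ^ (-τ) := by linarith [rpow_nonneg zero_le_two (-(τ * (α + 1)))]
    rw [← ENNReal.ofReal_one, ← ENNReal.ofReal_sub _ (rpow_nonneg zero_le_two _),
      ← div_eq_mul_inv, ← ENNReal.ofReal_div_of_pos hq, ENNReal.ofReal_lt_ofReal_iff one_pos,
      div_lt_one hq]
    linarith
  have hsum : ∑' p, Metric.ediam (p2dCover α p) ^ τ = C * (1 - A * (1 - Q)⁻¹)⁻¹ := by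
    calc ∑' p, Metric.ediam (p2dCover α p) ^ τ
        = ∑' (k : ℕ) (v : Fin k → ℕ), C * A ^ k * ∏ i, Q ^ v i := by
          rw [ENNReal.tsum_sigma']
          exact tsum_congr fun k => tsum_congr fun v => ediam_p2dCover_rpow α hτ v
      _ = ∑' k : ℕ, C * (A * (1 - Q)⁻¹) ^ k := by
          refine tsum_congr fun k => ?_
          rw [ENNReal.tsum_mul_left, ENNReal.tsum_fin_pi_prod (Q ^ ·), ENNReal.tsum_geometric,
            mul_pow, mul_assoc]
      _ = C * (1 - A * (1 - Q)⁻¹)⁻¹ := by rw [ENNReal.tsum_mul_left, ENNReal.tsum_geometric]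
  rw [hsum]
  exact ENNReal.mul_ne_top ENNReal.ofReal_ne_top (ENNReal.inv_ne_top.2 (tsub_pos_of_lt hratio).ne')

theorem p2d_dimH_F_alpha_le_general (α : ℝ) (hα : 0 < α) (s : ℝ)
    (heq : (2:ℝ) ^ (s * α) * ((2:ℝ) ^ s - 1) = 1) :
    dimH {x : ℝ | x ∈ Set.Ioc (0:ℝ) 1 ∧
        ∃ᶠ n in atTop, (α * n ≤ (p2dDigit n x : ℝ))} ≤ ENNReal.ofReal s := by
  have hs := pos_of_two_rpow_mul_two_rpow_sub_one_eq_one heq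
  refine dimH_le fun τ hτ => le_of_not_gt fun hsτ => ?_
  rw [ENNReal.ofReal_lt_coe_iff hs.le] at hsτ
  have hsum := tsum_ediam_p2dCover_rpow_ne_top τ.2
    (two_rpow_neg_add_two_rpow_neg_lt_one (by linarith) heq hsτ)
  have hnull := hausdorffMeasure_setOf_frequently_mem_eq_zero (hs.trans hsτ) hsum
  rw [measure_mono_null (setOf_frequently_le_p2dDigit_subset α) hnull] at hτ
  exact ENNReal.zero_ne_top hτ

/-- upper bound for the Hausdorff dimension of `F(α)`. -/
theorem p2d_dimH_F_alpha_le (α : ℝ) (hα : 0 < α) (s : ℝ) (hs : 0 < s)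
    (heq : (2:ℝ) ^ (s * α) * ((2:ℝ) ^ s - 1) = 1) :
    dimH {x : ℝ | x ∈ Set.Ioc (0:ℝ) 1 ∧
        ∃ᶠ n in atTop, (α * n ≤ (p2dDigit n x : ℝ))} ≤ ENNReal.ofReal s :=
  p2d_dimH_F_alpha_le_general α hα s heq
end
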